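/- Let d ≥ 3 and let (k_t)_{t>0} be jointly measurable kernels satisfying 0 ≤ k_t(x,y) ≤ P_t(x−y); set T_t f(x) = ∫_{ℝ^d} k_t(x,y) f(y) dy. Assume the semigroup property k_{t+s}(x,y) = ∫_{ℝ^d} k_t(x,z) k_s(z,y) dz for all s, t > 0 and almost every x, y ∈ ℝ^d, and that T_t f → f in L²(ℝ^d) as t → 0⁺ for every f ∈ L²(ℝ^d). Then for every τ > 0 and every f ∈ L¹(ℝ^d), ‖f‖_{L¹(ℝ^d)} ≤ ∫_{ℝ^d} sup_{0 < t ≤ τ} |T_t f(x)| dx. -/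

import Mathlib

open MeasureTheory Filter
open scoped ENNReal Topology

noncomputable section

/-- `ℝ^d` as a Euclidean space. -/
abbrev Rd (d : ℕ) := EuclideanSpace ℝ (Fin d)

/-- The Gauss–Weierstrass kernel `P_t(x) = (4πt)^{-d/2} exp(-|x|²/(4t))`. -/
def gauss (d : ℕ) (t : ℝ) (x : Rd d) : ℝ :=
  (4 * Real.pi * t) ^ (-(d : ℝ) / 2) * Real.exp (-‖x‖ ^ 2 / (4 * t))

/-!
The operators satisfy `T_t g → g` in `L²`, hence in measure along `t → 0⁺`, so by Fatou
`‖g‖₁ ≤ sup_{0<t≤τ} ‖T_t g‖₁` for `g ∈ L²`. Since `k_t ≤ P_t` and `∫ P_t = 1`, each `T_t` is a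
contraction of `L¹`, so replacing an `L¹` function `f` by a compactly supported continuous
`g` close to it in `L¹` costs at most `2 ‖f - g‖₁`; and `‖T_t f‖₁` is dominated by the
integral of the maximal function.
-/

section Gauss

variable {d : ℕ} {t : ℝ}

lemma gauss_eq_mul_exp (x : Rd d) :
    gauss d t x = (4 * Real.pi * t) ^ (-(d : ℝ) / 2) * Real.exp (-(1 / (4 * t)) * ‖x‖ ^ 2) := by
  rw [gauss]
  congr 2
  ring

lemma integral_gauss (ht : 0 < t) : ∫ x, gauss d t x = 1 := by
  have hb : (0 : ℝ) < 1 / (4 * t) := by positivity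
  have h4 : (0 : ℝ) < 4 * Real.pi * t := by positivity
  simp_rw [gauss_eq_mul_exp, integral_const_mul,
    GaussianFourier.integral_rexp_neg_mul_sq_norm hb, finrank_euclideanSpace_fin]
  rw [show Real.pi / (1 / (4 * t)) = 4 * Real.pi * t by field_simp, ← Real.rpow_add h4,
    neg_div, neg_add_cancel, Real.rpow_zero]

lemma integrable_gauss (ht : 0 < t) : Integrable (gauss d t) :=
  .of_integral_ne_zero (by rw [integral_gauss ht]; exact one_ne_zero)

lemma gauss_nonneg (ht : 0 < t) (x : Rd d) : 0 ≤ gauss d t x := by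
  have : (0 : ℝ) < 4 * Real.pi * t := by positivity
  unfold gauss
  positivity

lemma gauss_le (ht : 0 < t) (x : Rd d) : gauss d t x ≤ (4 * Real.pi * t) ^ (-(d : ℝ) / 2) := by
  have : (0 : ℝ) < 4 * Real.pi * t := by positivity
  refine mul_le_of_le_one_right (by positivity) (Real.exp_le_one_iff.2 ?_)
  rw [neg_div]
  exact neg_nonpos.2 (by positivity)

lemma lintegral_ofReal_gauss_sub (ht : 0 < t) (y : Rd d) :
    ∫⁻ x, ENNReal.ofReal (gauss d t (x - y)) = 1 := by
  rw [← ofReal_integral_eq_lintegral_ofReal ((integrable_gauss ht).comp_sub_right y)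
      (Eventually.of_forall fun x => gauss_nonneg ht _),
    integral_sub_right_eq_self (gauss d t) y, integral_gauss ht, ENNReal.ofReal_one]

end Gauss

section KernelOperator

variable {α β : Type*} [MeasurableSpace α] [MeasurableSpace β] {μ : Measure α} {ν : Measure β}
  {κ : β → α → ℝ} {f g h : α → ℝ}

def kernelOp (κ : β → α → ℝ) (μ : Measure α) (h : α → ℝ) (x : β) : ℝ :=
  ∫ y, κ x y * h y ∂μ

lemma aestronglyMeasurable_kernelOp [SFinite μ] [SFinite ν] (hκ : Measurable (Function.uncurry κ))
    (hh : AEStronglyMeasurable h μ) : AEStronglyMeasurable (kernelOp κ μ h) ν :=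
  AEStronglyMeasurable.integral_prod_right' (f := fun p : β × α => κ p.1 p.2 * h p.2)
    (hκ.aestronglyMeasurable.mul
      (hh.comp_quasiMeasurePreserving Measure.quasiMeasurePreserving_snd))

lemma eLpNorm_one_kernelOp_le [SFinite μ] [SFinite ν] (hκ : Measurable (Function.uncurry κ))
    (hmass : ∀ y, ∫⁻ x, ‖κ x y‖ₑ ∂ν ≤ 1) (hh : AEStronglyMeasurable h μ) :
    eLpNorm (kernelOp κ μ h) 1 ν ≤ eLpNorm h 1 μ := by
  simp only [eLpNorm_one_eq_lintegral_enorm, kernelOp]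
  calc ∫⁻ x, ‖∫ y, κ x y * h y ∂μ‖ₑ ∂ν
      ≤ ∫⁻ x, ∫⁻ y, ‖κ x y‖ₑ * ‖h y‖ₑ ∂μ ∂ν :=
        lintegral_mono fun x => (enorm_integral_le_lintegral_enorm _).trans_eq (by simp [enorm_mul])
    _ = ∫⁻ y, ∫⁻ x, ‖κ x y‖ₑ * ‖h y‖ₑ ∂ν ∂μ :=
        lintegral_lintegral_swap (hκ.enorm.aemeasurable.mul hh.enorm.comp_snd)
    _ = ∫⁻ y, (∫⁻ x, ‖κ x y‖ₑ ∂ν) * ‖h y‖ₑ ∂μ := by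
        congr 1 with y
        exact lintegral_mul_const _ (hκ.comp measurable_prodMk_right).enorm
    _ ≤ ∫⁻ y, ‖h y‖ₑ ∂μ :=
        lintegral_mono fun y => by simpa using mul_le_mul_left (hmass y) ‖h y‖ₑ

lemma integrable_kernel_mul {C : ℝ} (hκ : Measurable (Function.uncurry κ)) (x : β)
    (hbdd : ∀ y, ‖κ x y‖ ≤ C) (hh : Integrable h μ) : Integrable (fun y => κ x y * h y) μ :=
  hh.bdd_mul (hκ.comp measurable_prodMk_left).aestronglyMeasurable (Eventually.of_forall hbdd)

lemma kernelOp_sub {C : ℝ} (hκ : Measurable (Function.uncurry κ)) (hbdd : ∀ x y, ‖κ x y‖ ≤ C)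
    (hf : Integrable f μ) (hg : Integrable g μ) :
    kernelOp κ μ (f - g) = kernelOp κ μ f - kernelOp κ μ g := by
  ext x
  simp only [kernelOp, Pi.sub_apply, mul_sub]
  exact integral_sub (integrable_kernel_mul hκ x (hbdd x) hf)
    (integrable_kernel_mul hκ x (hbdd x) hg)

lemma eLpNorm_one_kernelOp_le_add [SFinite μ] [SFinite ν] {C : ℝ}
    (hκ : Measurable (Function.uncurry κ)) (hbdd : ∀ x y, ‖κ x y‖ ≤ C)
    (hmass : ∀ y, ∫⁻ x, ‖κ x y‖ₑ ∂ν ≤ 1) (hf : Integrable f μ) (hg : Integrable g μ) :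
    eLpNorm (kernelOp κ μ g) 1 ν ≤ eLpNorm (kernelOp κ μ f) 1 ν + eLpNorm (g - f) 1 μ := by
  have hsplit : kernelOp κ μ g = kernelOp κ μ f + kernelOp κ μ (g - f) := by
    rw [kernelOp_sub hκ hbdd hg hf, add_sub_cancel]
  rw [hsplit]
  refine (eLpNorm_add_le (aestronglyMeasurable_kernelOp hκ hf.1)
    (aestronglyMeasurable_kernelOp hκ (hg.1.sub hf.1)) le_rfl).trans ?_
  gcongr
  exact eLpNorm_one_kernelOp_le hκ hmass (hg.1.sub hf.1)

end KernelOperator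

section GaussDominated

variable {d : ℕ} {t : ℝ} {κ : Rd d → Rd d → ℝ}

lemma norm_le_of_le_gauss (ht : 0 < t) (hκ : ∀ x y, 0 ≤ κ x y ∧ κ x y ≤ gauss d t (x - y))
    (x y : Rd d) : ‖κ x y‖ ≤ (4 * Real.pi * t) ^ (-(d : ℝ) / 2) := by
  rw [Real.norm_of_nonneg (hκ x y).1]
  exact (hκ x y).2.trans (gauss_le ht _)

lemma lintegral_enorm_le_one_of_le_gauss (ht : 0 < t)
    (hκ : ∀ x y, 0 ≤ κ x y ∧ κ x y ≤ gauss d t (x - y)) (y : Rd d) :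
    ∫⁻ x, ‖κ x y‖ₑ ≤ 1 := by
  calc ∫⁻ x, ‖κ x y‖ₑ ≤ ∫⁻ x, ENNReal.ofReal (gauss d t (x - y)) := by
        refine lintegral_mono fun x => ?_
        rw [Real.enorm_of_nonneg (hκ x y).1]
        exact ENNReal.ofReal_le_ofReal (hκ x y).2
    _ = 1 := lintegral_ofReal_gauss_sub ht y

end GaussDominated

lemma eLpNorm_one_le_iSup_of_tendsto_eLpNorm {α : Type*} [MeasurableSpace α] {μ : Measure α}
    {p : ℝ≥0∞} (hp : p ≠ 0) {τ : ℝ} (hτ : 0 < τ) {u : ℝ → α → ℝ} {g : α → ℝ}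
    (hu : ∀ t, AEStronglyMeasurable (u t) μ) (hg : AEStronglyMeasurable g μ)
    (hlim : Tendsto (fun t => eLpNorm (u t - g) p μ) (𝓝[>] 0) (𝓝 0)) :
    eLpNorm g 1 μ ≤ ⨆ t ∈ Set.Ioc 0 τ, eLpNorm (u t) 1 μ := by
  refine eLpNorm_le_of_tendstoInMeasure ?_ (tendstoInMeasure_of_tendsto_eLpNorm hp hu hg hlim) hu
  filter_upwards [Ioc_mem_nhdsGT hτ] with t ht
  exact le_iSup₂ (f := fun t (_ : t ∈ Set.Ioc 0 τ) => eLpNorm (u t) 1 μ) t ht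

section HeatKernel

variable {d : ℕ} {k : ℝ → Rd d → Rd d → ℝ} {τ : ℝ}

lemma measurable_uncurry_apply (hkmeas : Measurable fun p : ℝ × Rd d × Rd d => k p.1 p.2.1 p.2.2)
    (t : ℝ) : Measurable (Function.uncurry (k t)) :=
  hkmeas.comp (measurable_const.prodMk measurable_id)

lemma eLpNorm_one_le_lintegral_iSup_add
    (hkmeas : Measurable fun p : ℝ × Rd d × Rd d => k p.1 p.2.1 p.2.2)
    (hk : ∀ t > (0 : ℝ), ∀ x y : Rd d, 0 ≤ k t x y ∧ k t x y ≤ gauss d t (x - y))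
    (hτ : 0 < τ) {f g : Rd d → ℝ} (hf : Integrable f) (hg : Integrable g)
    (hTg : Tendsto (fun t => eLpNorm (kernelOp (k t) volume g - g) 2 volume) (𝓝[>] 0) (𝓝 0)) :
    eLpNorm f 1 volume ≤ (∫⁻ x, ⨆ t ∈ Set.Ioc (0 : ℝ) τ, ENNReal.ofReal |kernelOp (k t) volume f x|)
      + eLpNorm (f - g) 1 volume + eLpNorm (f - g) 1 volume := by
  set M := ∫⁻ x, ⨆ t ∈ Set.Ioc (0 : ℝ) τ, ENNReal.ofReal |kernelOp (k t) volume f x|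
  have hTf : ∀ t ∈ Set.Ioc 0 τ, eLpNorm (kernelOp (k t) volume f) 1 volume ≤ M := fun t ht => by
    rw [eLpNorm_one_eq_lintegral_enorm]
    refine lintegral_mono fun x => ?_
    rw [Real.enorm_eq_ofReal_abs]
    exact le_iSup₂ (f := fun t (_ : t ∈ Set.Ioc 0 τ) =>
      ENNReal.ofReal |kernelOp (k t) volume f x|) t ht
  have hTg_le : ∀ t ∈ Set.Ioc 0 τ,
      eLpNorm (kernelOp (k t) volume g) 1 volume ≤ M + eLpNorm (f - g) 1 volume := fun t ht => by
    rw [← eLpNorm_sub_comm]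
    exact (eLpNorm_one_kernelOp_le_add (measurable_uncurry_apply hkmeas t)
      (norm_le_of_le_gauss ht.1 (hk t ht.1)) (lintegral_enorm_le_one_of_le_gauss ht.1 (hk t ht.1))
      hf hg).trans (add_le_add_left (hTf t ht) _)
  calc eLpNorm f 1 volume = eLpNorm (g + (f - g)) 1 volume := by rw [add_sub_cancel]
    _ ≤ eLpNorm g 1 volume + eLpNorm (f - g) 1 volume :=
        eLpNorm_add_le hg.1 (hf.1.sub hg.1) le_rfl
    _ ≤ M + eLpNorm (f - g) 1 volume + eLpNorm (f - g) 1 volume := by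
        gcongr
        refine (eLpNorm_one_le_iSup_of_tendsto_eLpNorm two_ne_zero hτ (fun t => ?_) hg.1 hTg).trans
          (iSup₂_le hTg_le)
        exact aestronglyMeasurable_kernelOp (measurable_uncurry_apply hkmeas t) hg.1

end HeatKernel

theorem statement18_general (d : ℕ) (k : ℝ → Rd d → Rd d → ℝ)
    (hkmeas : Measurable fun p : ℝ × Rd d × Rd d => k p.1 p.2.1 p.2.2)
    (hk : ∀ t > (0 : ℝ), ∀ x y : Rd d, 0 ≤ k t x y ∧ k t x y ≤ gauss d t (x - y))
    (hL2 : ∀ f : Rd d → ℝ, MemLp f 2 volume →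
      Tendsto (fun t => eLpNorm (fun x => (∫ y, k t x y * f y) - f x) 2 volume)
        (𝓝[>] (0 : ℝ)) (𝓝 0)) :
    ∀ τ > (0 : ℝ), ∀ f : Rd d → ℝ, Integrable f →
      ENNReal.ofReal (∫ x, |f x|) ≤
        ∫⁻ x, ⨆ t ∈ Set.Ioc (0 : ℝ) τ, ENNReal.ofReal |∫ y, k t x y * f y| := by
  intro τ hτ f hf
  rw [show (∫ x, |f x|) = ∫ x, ‖f x‖ from rfl, ofReal_integral_norm_eq_lintegral_enorm hf,
    ← eLpNorm_one_eq_lintegral_enorm]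
  refine ENNReal.le_of_forall_pos_le_add fun ε hε _ => ?_
  obtain ⟨g, hg_supp, hfg, hg_cont, -⟩ :=
    (memLp_one_iff_integrable.2 hf).exists_hasCompactSupport_eLpNorm_sub_le ENNReal.one_ne_top
      (ε := ε / 2) (by simpa using hε.ne')
  calc eLpNorm f 1 volume
      ≤ (∫⁻ x, ⨆ t ∈ Set.Ioc (0 : ℝ) τ, ENNReal.ofReal |∫ y, k t x y * f y|)
        + eLpNorm (f - g) 1 volume + eLpNorm (f - g) 1 volume :=
        eLpNorm_one_le_lintegral_iSup_add hkmeas hk hτ hf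
          (hg_cont.integrable_of_hasCompactSupport hg_supp)
          (hL2 g (hg_cont.memLp_of_hasCompactSupport hg_supp))
    _ ≤ (∫⁻ x, ⨆ t ∈ Set.Ioc (0 : ℝ) τ, ENNReal.ofReal |∫ y, k t x y * f y|) + ε / 2 + ε / 2 := by
        gcongr
    _ = _ := by rw [add_assoc, ENNReal.add_halves]

/-- Corollary, Appendix: under the same assumptions as Statement 16,
for every `τ > 0` and `f ∈ L¹`, `‖f‖_{L¹} ≤ ∫ sup_{0 < t ≤ τ} |T_t f(x)| dx`,
the right-hand side being an upper Lebesgue integral. -/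
theorem statement18 (d : ℕ) (hd : 3 ≤ d) (k : ℝ → Rd d → Rd d → ℝ)
    (hkmeas : Measurable fun p : ℝ × Rd d × Rd d => k p.1 p.2.1 p.2.2)
    (hk : ∀ t > (0 : ℝ), ∀ x y : Rd d, 0 ≤ k t x y ∧ k t x y ≤ gauss d t (x - y))
    (hsemi : ∀ s > (0 : ℝ), ∀ t > (0 : ℝ), ∀ᵐ p : Rd d × Rd d ∂(volume.prod volume),
      k (t + s) p.1 p.2 = ∫ z, k t p.1 z * k s z p.2)
    (hL2 : ∀ f : Rd d → ℝ, MemLp f 2 volume →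
      Tendsto (fun t => eLpNorm (fun x => (∫ y, k t x y * f y) - f x) 2 volume)
        (𝓝[>] (0 : ℝ)) (𝓝 0)) :
    ∀ τ > (0 : ℝ), ∀ f : Rd d → ℝ, Integrable f →
      ENNReal.ofReal (∫ x, |f x|) ≤
        ∫⁻ x, ⨆ t ∈ Set.Ioc (0 : ℝ) τ, ENNReal.ofReal |∫ y, k t x y * f y| :=
  statement18_general d k hkmeas hk hL2
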